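/- arXiv:2605.22948 — 6 statements merged into one kernel-verified Lean document; each statement's English description precedes it below -/
import Mathlib

section
/- Let n ≥ 3 and let (s_1, s_2, s_3) and (t_1, t_2, t_3) be two compositions of n into 3 positive parts such that the multisets {ic(s_1), ic(s_2), ic(s_1+s_2)} and {ic(t_1), ic(t_2), ic(t_1+t_2)} are equal, where ic(x) = min(x, n-x). Then (t_1,t_2,t_3) is obtained from (s_1,s_2,s_3) by a cyclic rotation or by a reversal followed by a cyclic rotation. -/
set_option maxHeartbeats 1600000

lemma triple_multiset_eq {a b c d e f : ℕ} (h : ({a,b,c} : Multiset ℕ) = {d,e,f}) :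
    (a=d∧b=e∧c=f)∨(a=d∧b=f∧c=e)∨(a=e∧b=d∧c=f)∨(a=e∧b=f∧c=d)∨(a=f∧b=d∧c=e)∨(a=f∧b=e∧c=d) := by
  simp only [Multiset.insert_eq_cons, Multiset.cons_eq_cons, Multiset.singleton_eq_cons_iff] at h
  obtain ⟨rfl, ⟨rfl, hcf⟩ | ⟨-, cs, ⟨rfl, rfl⟩, rfl, -⟩⟩ | ⟨-, cs, h1, h2⟩ := h
  · simp at hcf; tauto
  · tauto
  · obtain ⟨rfl, rfl⟩ | ⟨-, cs1, ⟨rfl, rfl⟩, rfl⟩ := h1 <;>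
      obtain ⟨rfl, h2'⟩ | ⟨-, cs2, ⟨rfl, rfl⟩, h2'⟩ := h2 <;>
      simp_all [Multiset.cons_eq_cons] <;> tauto

lemma ic_eq_cases {n a b : ℕ} (h : min a (n - a) = min b (n - b))
    (ha : 0 < a) (ha' : a < n) (hb : 0 < b) (hb' : b < n) : b = a ∨ b = n - a := by
  omega

/-- No Z-relation at cardinality 3: two compositions of `n` into three positive
parts with the same interval-class multiset are related by a cyclic rotation,
possibly composed with a reversal. Here `icn x = min x (n - x)`. -/
theorem no_Z_relation_at_k3 (n : ℕ) (hn : 3 ≤ n)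
    (s1 s2 s3 t1 t2 t3 : ℕ)
    (hs1 : 0 < s1) (hs2 : 0 < s2) (hs3 : 0 < s3)
    (ht1 : 0 < t1) (ht2 : 0 < t2) (ht3 : 0 < t3)
    (hs : s1 + s2 + s3 = n) (ht : t1 + t2 + t3 = n)
    (hμ : ({min s1 (n - s1), min s2 (n - s2), min (s1 + s2) (n - (s1 + s2))} : Multiset ℕ)
        = {min t1 (n - t1), min t2 (n - t2), min (t1 + t2) (n - (t1 + t2))}) :
    (t1, t2, t3) = (s1, s2, s3) ∨ (t1, t2, t3) = (s2, s3, s1) ∨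
    (t1, t2, t3) = (s3, s1, s2) ∨ (t1, t2, t3) = (s3, s2, s1) ∨
    (t1, t2, t3) = (s2, s1, s3) ∨ (t1, t2, t3) = (s1, s3, s2) := by
  simp only [Prod.mk.injEq]
  have bs1 : s1 < n := by omega
  have bs2 : s2 < n := by omega
  have bs12 : s1 + s2 < n := by omega
  have bs12' : 0 < s1 + s2 := by omega
  have bt1 : t1 < n := by omega
  have bt2 : t2 < n := by omega
  have bt12 : t1 + t2 < n := by omega
  have bt12' : 0 < t1 + t2 := by omega
  rcases triple_multiset_eq hμ with ⟨h1,h2,h3⟩|⟨h1,h2,h3⟩|⟨h1,h2,h3⟩|⟨h1,h2,h3⟩|⟨h1,h2,h3⟩|⟨h1,h2,h3⟩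
  · rcases ic_eq_cases h1 hs1 bs1 ht1 bt1 with h1'|h1' <;>
      rcases ic_eq_cases h2 hs2 bs2 ht2 bt2 with h2'|h2' <;>
      rcases ic_eq_cases h3 bs12' bs12 bt12' bt12 with h3'|h3' <;> (clear h1 h2 h3 hμ; first | (left; omega) | (right; left; omega) | (right; right; left; omega) | (right; right; right; left; omega) | (right; right; right; right; left; omega) | (right; right; right; right; right; omega))
  · rcases ic_eq_cases h1 hs1 bs1 ht1 bt1 with h1'|h1' <;>
      rcases ic_eq_cases h2 hs2 bs2 bt12' bt12 with h2'|h2' <;>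
      rcases ic_eq_cases h3 bs12' bs12 ht2 bt2 with h3'|h3' <;> (clear h1 h2 h3 hμ; first | (left; omega) | (right; left; omega) | (right; right; left; omega) | (right; right; right; left; omega) | (right; right; right; right; left; omega) | (right; right; right; right; right; omega))
  · rcases ic_eq_cases h1 hs1 bs1 ht2 bt2 with h1'|h1' <;>
      rcases ic_eq_cases h2 hs2 bs2 ht1 bt1 with h2'|h2' <;>
      rcases ic_eq_cases h3 bs12' bs12 bt12' bt12 with h3'|h3' <;> (clear h1 h2 h3 hμ; first | (left; omega) | (right; left; omega) | (right; right; left; omega) | (right; right; right; left; omega) | (right; right; right; right; left; omega) | (right; right; right; right; right; omega))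
  · rcases ic_eq_cases h1 hs1 bs1 ht2 bt2 with h1'|h1' <;>
      rcases ic_eq_cases h2 hs2 bs2 bt12' bt12 with h2'|h2' <;>
      rcases ic_eq_cases h3 bs12' bs12 ht1 bt1 with h3'|h3' <;> (clear h1 h2 h3 hμ; first | (left; omega) | (right; left; omega) | (right; right; left; omega) | (right; right; right; left; omega) | (right; right; right; right; left; omega) | (right; right; right; right; right; omega))
  · rcases ic_eq_cases h1 hs1 bs1 bt12' bt12 with h1'|h1' <;>
      rcases ic_eq_cases h2 hs2 bs2 ht1 bt1 with h2'|h2' <;>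
      rcases ic_eq_cases h3 bs12' bs12 ht2 bt2 with h3'|h3' <;> (clear h1 h2 h3 hμ; first | (left; omega) | (right; left; omega) | (right; right; left; omega) | (right; right; right; left; omega) | (right; right; right; right; left; omega) | (right; right; right; right; right; omega))
  · rcases ic_eq_cases h1 hs1 bs1 bt12' bt12 with h1'|h1' <;>
      rcases ic_eq_cases h2 hs2 bs2 ht2 bt2 with h2'|h2' <;>
      rcases ic_eq_cases h3 bs12' bs12 ht1 bt1 with h3'|h3' <;> (clear h1 h2 h3 hμ; first | (left; omega) | (right; left; omega) | (right; right; left; omega) | (right; right; right; left; omega) | (right; right; right; right; left; omega) | (right; right; right; right; right; omega))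
end

section
/- For any n ≥ 3, any two 3-element subsets of Z_n with the same interval-class multiset are related by a transposition or an inversion of Z_n. Equivalently, no Z-relation exists among trichords in any Z_n. -/
/-- Interval class between `p` and `q` in `ZMod n`. -/
def ic (n : ℕ) (p q : ZMod n) : ℕ := min (p - q).val (n - (p - q).val)

/-- The interval-class multiset of a pitch-class set: one interval class for each
unordered pair of distinct elements (enumerated via `val`-increasing ordered pairs;
`ic` is symmetric, so this is the multiset of interval classes of unordered pairs). -/
def intervalMultiset (n : ℕ) (P : Finset (ZMod n)) : Multiset ℕ :=
  (((P ×ˢ P).filter fun x => x.1.val < x.2.val).val).map fun x => ic n x.1 x.2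

lemma exists_sorted {n : ℕ} [NeZero n] (P : Finset (ZMod n)) (h : P.card = 3) :
    ∃ a b c : ZMod n, a.val < b.val ∧ b.val < c.val ∧ P = {a, b, c} := by
  obtain ⟨x, y, z, hxy, hxz, hyz, rfl⟩ := Finset.card_eq_three.mp h
  have hxy' : x.val ≠ y.val := fun h => hxy (ZMod.val_injective n h)
  have hxz' : x.val ≠ z.val := fun h => hxz (ZMod.val_injective n h)
  have hyz' : y.val ≠ z.val := fun h => hyz (ZMod.val_injective n h)
  rcases Nat.lt_or_ge x.val y.val with h1 | h1 <;>
  rcases Nat.lt_or_ge y.val z.val with h2 | h2 <;>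
  rcases Nat.lt_or_ge x.val z.val with h3 | h3
  · exact ⟨x, y, z, h1, h2, rfl⟩
  · omega
  · exact ⟨x, z, y, by omega, by omega, by ext w; simp; tauto⟩
  · exact ⟨z, x, y, by omega, by omega, by ext w; simp; tauto⟩
  · exact ⟨y, x, z, by omega, by omega, by ext w; simp; tauto⟩
  · exact ⟨y, z, x, by omega, by omega, by ext w; simp; tauto⟩
  · omega
  · exact ⟨z, y, x, by omega, by omega, by ext w; simp; tauto⟩

lemma filter_sorted {n : ℕ} [NeZero n] {a b c : ZMod n} (hab : a.val < b.val) (hbc : b.val < c.val) :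
    ((({a,b,c} : Finset (ZMod n)) ×ˢ {a,b,c}).filter fun x => x.1.val < x.2.val) =
      {(a,b),(a,c),(b,c)} := by
  ext ⟨p, q⟩
  simp only [Finset.mem_filter, Finset.mem_product, Finset.mem_insert, Finset.mem_singleton,
    Prod.mk.injEq]
  constructor
  · rintro ⟨⟨(rfl|rfl|rfl), (rfl|rfl|rfl)⟩, h⟩ <;> first | tauto | omega
  · rintro ((⟨rfl, rfl⟩)|(⟨rfl, rfl⟩)|(⟨rfl, rfl⟩)) <;> refine ⟨⟨by tauto, by tauto⟩, by omega⟩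

lemma im_sorted {n : ℕ} [NeZero n] {a b c : ZMod n} (hab : a.val < b.val) (hbc : b.val < c.val) :
    intervalMultiset n {a,b,c} = {ic n a b, ic n a c, ic n b c} := by
  have hab' : a ≠ b := by rintro rfl; omega
  have hbc' : b ≠ c := by rintro rfl; omega
  have hac' : a ≠ c := by rintro rfl; omega
  have hne1 : (a,b) ≠ (a,c) := by simp [Prod.ext_iff, hbc']
  have hne2 : (a,b) ≠ (b,c) := by simp [Prod.ext_iff, hab']
  have hne3 : (a,c) ≠ (b,c) := by simp [Prod.ext_iff, hab']
  rw [intervalMultiset, filter_sorted hab hbc]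
  rw [Finset.insert_val, Finset.insert_val,
    Multiset.ndinsert_of_notMem (by simp [hne1, hne2]),
    Multiset.ndinsert_of_notMem (by simp [hne3])]
  simp [Finset.singleton_val]

lemma ic_sorted {n : ℕ} [NeZero n] {p q : ZMod n} (h : p.val < q.val) :
    ic n p q = min (q.val - p.val) (n - (q.val - p.val)) := by
  have h1 : (q - p).val = q.val - p.val := ZMod.val_sub (le_of_lt h)
  have hqp : q - p ≠ 0 := by
    intro h0
    rw [h0, ZMod.val_zero] at h1
    omega
  haveI : NeZero (q - p) := ⟨hqp⟩
  have h2 : (p - q).val = n - (q - p).val := by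
    rw [show p - q = -(q - p) by ring, ZMod.val_neg_of_ne_zero]
  have hqlt : q.val < n := ZMod.val_lt q
  rw [ic, h2, h1]
  omega

lemma mul2 {x y x' y' : ℕ} (h : ({x, y} : Multiset ℕ) = {x', y'}) :
    (x = x' ∧ y = y') ∨ (x = y' ∧ y = x') := by
  have hx : x ∈ ({x', y'} : Multiset ℕ) := by rw [← h]; simp
  simp only [Multiset.insert_eq_cons, Multiset.mem_cons, Multiset.mem_singleton] at hx
  rcases hx with rfl | rfl
  · left
    refine ⟨rfl, ?_⟩
    have := (Multiset.cons_inj_right x).mp h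
    simpa using this
  · right
    refine ⟨rfl, ?_⟩
    rw [show ({x', x} : Multiset ℕ) = x ::ₘ {x'} from Multiset.cons_swap _ _ _] at h
    have := (Multiset.cons_inj_right x).mp h
    simpa using this

lemma mul3 {x y z x' y' z' : ℕ} (h : ({x, y, z} : Multiset ℕ) = {x', y', z'}) :
    (x = x' ∧ y = y' ∧ z = z') ∨ (x = x' ∧ y = z' ∧ z = y') ∨
    (x = y' ∧ y = x' ∧ z = z') ∨ (x = y' ∧ y = z' ∧ z = x') ∨
    (x = z' ∧ y = x' ∧ z = y') ∨ (x = z' ∧ y = y' ∧ z = x') := by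
  have hx : x ∈ ({x', y', z'} : Multiset ℕ) := by rw [← h]; simp
  simp only [Multiset.insert_eq_cons, Multiset.mem_cons, Multiset.mem_singleton] at hx
  rcases hx with rfl | rfl | rfl
  · have h2 := (Multiset.cons_inj_right x).mp h
    rcases mul2 h2 with ⟨rfl, rfl⟩ | ⟨rfl, rfl⟩ <;> omega
  · rw [show ({x', x, z'} : Multiset ℕ) = x ::ₘ {x', z'} from Multiset.cons_swap _ _ _] at h
    have h2 := (Multiset.cons_inj_right x).mp h
    rcases mul2 h2 with ⟨rfl, rfl⟩ | ⟨rfl, rfl⟩ <;> omega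
  · rw [show ({x', y', x} : Multiset ℕ) = x ::ₘ {x', y'} by
      show x' ::ₘ y' ::ₘ x ::ₘ (0 : Multiset ℕ) = x ::ₘ x' ::ₘ y' ::ₘ 0
      rw [Multiset.cons_swap y' x, Multiset.cons_swap x' x]] at h
    have h2 := (Multiset.cons_inj_right x).mp h
    rcases mul2 h2 with ⟨rfl, rfl⟩ | ⟨rfl, rfl⟩ <;> omega

lemma val_cast {n : ℕ} [NeZero n] (x : ZMod n) : ((x.val : ℕ) : ZMod n) = x := by
  simp [ZMod.natCast_val, ZMod.cast_id]

lemma min_eq_cases {n x y : ℕ} (hx' : x < n) (hy' : y < n)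
    (h : min x (n - x) = min y (n - y)) : x = y ∨ x + y = n := by omega

lemma gap_key {n d1 d2 e1 e2 : ℕ} (hd1 : 0 < d1) (hd2 : 0 < d2) (he1 : 0 < e1) (he2 : 0 < e2)
    (hs : d1 + d2 < n) (hs' : e1 + e2 < n)
    (h : ({min d1 (n - d1), min (d1 + d2) (n - (d1 + d2)), min d2 (n - d2)} : Multiset ℕ)
       = {min e1 (n - e1), min (e1 + e2) (n - (e1 + e2)), min e2 (n - e2)}) :
    (e1 = d1 ∧ e2 = d2) ∨ (e1 = d2 ∧ e2 = n - d1 - d2) ∨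
      (e1 = n - d1 - d2 ∧ e2 = d1) ∨ (e1 = d2 ∧ e2 = d1) ∨
      (e1 = d1 ∧ e2 = n - d1 - d2) ∨ (e1 = n - d1 - d2 ∧ e2 = d2) := by
  rcases mul3 h with ⟨q1,q2,q3⟩|⟨q1,q2,q3⟩|⟨q1,q2,q3⟩|⟨q1,q2,q3⟩|⟨q1,q2,q3⟩|⟨q1,q2,q3⟩ <;>
  rcases min_eq_cases (by omega) (by omega) q1 with q1' | q1' <;>
  rcases min_eq_cases (by omega) (by omega) q2 with q2' | q2' <;>
  rcases min_eq_cases (by omega) (by omega) q3 with q3' | q3' <;>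
  omega

/-- No Z-relation among trichords: two 3-element subsets of `ZMod n` with the same
interval-class multiset are related by a transposition or an inversion. -/
theorem trichords_not_Z_related (n : ℕ) (hn : 3 ≤ n) (P1 P2 : Finset (ZMod n))
    (h1 : P1.card = 3) (h2 : P2.card = 3)
    (hμ : intervalMultiset n P1 = intervalMultiset n P2) :
    (∃ t : ZMod n, P1.image (fun p => p + t) = P2) ∨
    (∃ s : ZMod n, P1.image (fun p => s - p) = P2) := by
  haveI : NeZero n := ⟨by omega⟩
  obtain ⟨a, b, c, hab, hbc, rfl⟩ := exists_sorted P1 h1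
  obtain ⟨a', b', c', hab', hbc', rfl⟩ := exists_sorted P2 h2
  have hcn : c.val < n := ZMod.val_lt c
  have hcn' : c'.val < n := ZMod.val_lt c'
  rw [im_sorted hab hbc, im_sorted hab' hbc',
    ic_sorted hab, ic_sorted (lt_trans hab hbc), ic_sorted hbc,
    ic_sorted hab', ic_sorted (lt_trans hab' hbc'), ic_sorted hbc'] at hμ
  obtain ⟨d1, hd1, hd1p⟩ : ∃ d, b.val = a.val + d ∧ 0 < d := ⟨b.val - a.val, by omega, by omega⟩
  obtain ⟨d2, hd2, hd2p⟩ : ∃ d, c.val = b.val + d ∧ 0 < d := ⟨c.val - b.val, by omega, by omega⟩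
  obtain ⟨e1, he1, he1p⟩ : ∃ d, b'.val = a'.val + d ∧ 0 < d := ⟨b'.val - a'.val, by omega, by omega⟩
  obtain ⟨e2, he2, he2p⟩ : ∃ d, c'.val = b'.val + d ∧ 0 < d := ⟨c'.val - b'.val, by omega, by omega⟩
  rw [show b.val - a.val = d1 by omega, show c.val - a.val = d1 + d2 by omega,
    show c.val - b.val = d2 by omega, show b'.val - a'.val = e1 by omega,
    show c'.val - a'.val = e1 + e2 by omega, show c'.val - b'.val = e2 by omega] at hμ
  have key := gap_key hd1p hd2p he1p he2p (by omega) (by omega) hμ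
  have hb : b = a + (d1 : ZMod n) := by
    rw [← val_cast b, hd1]; push_cast; rw [val_cast]
  have hc : c = a + (d1 : ZMod n) + (d2 : ZMod n) := by
    rw [← val_cast c, show c.val = a.val + d1 + d2 by omega]; push_cast; rw [val_cast]
  have hb' : b' = a' + (e1 : ZMod n) := by
    rw [← val_cast b', he1]; push_cast; rw [val_cast]
  have hc' : c' = a' + (e1 : ZMod n) + (e2 : ZMod n) := by
    rw [← val_cast c', show c'.val = a'.val + e1 + e2 by omega]; push_cast; rw [val_cast]
  have hd3 : ((n - d1 - d2 : ℕ) : ZMod n) = -(d1 : ZMod n) - (d2 : ZMod n) := by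
    rw [Nat.cast_sub (by omega), Nat.cast_sub (by omega), ZMod.natCast_self]; ring
  rcases key with ⟨k1, k2⟩ | ⟨k1, k2⟩ | ⟨k1, k2⟩ | ⟨k1, k2⟩ | ⟨k1, k2⟩ | ⟨k1, k2⟩ <;>
      rw [k1] at hb' <;> rw [k1, k2] at hc'
  · refine Or.inl ⟨a' - a, ?_⟩
    simp only [Finset.image_insert, Finset.image_singleton]
    rw [hb, hc, hb', hc',
      show a + (a' - a) = a' by ring,
      show a + (d1 : ZMod n) + (a' - a) = a' + (d1 : ZMod n) by ring,
      show a + (d1 : ZMod n) + (d2 : ZMod n) + (a' - a)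
        = a' + (d1 : ZMod n) + (d2 : ZMod n) by ring]
  · refine Or.inl ⟨a' - a - (d1 : ZMod n), ?_⟩
    simp only [Finset.image_insert, Finset.image_singleton]
    rw [hb, hc, hb', hc', hd3,
      show a + (a' - a - (d1 : ZMod n)) = a' - (d1 : ZMod n) by ring,
      show a + (d1 : ZMod n) + (a' - a - (d1 : ZMod n)) = a' by ring,
      show a + (d1 : ZMod n) + (d2 : ZMod n) + (a' - a - (d1 : ZMod n))
        = a' + (d2 : ZMod n) by ring,
      show a' + (d2 : ZMod n) + (-(d1 : ZMod n) - (d2 : ZMod n)) = a' - (d1 : ZMod n) by ring]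
    ext w; simp only [Finset.mem_insert, Finset.mem_singleton]; tauto
  · refine Or.inl ⟨a' - a - (d1 : ZMod n) - (d2 : ZMod n), ?_⟩
    simp only [Finset.image_insert, Finset.image_singleton]
    rw [hb, hc, hb', hc', hd3,
      show a + (a' - a - (d1 : ZMod n) - (d2 : ZMod n))
        = a' - (d1 : ZMod n) - (d2 : ZMod n) by ring,
      show a + (d1 : ZMod n) + (a' - a - (d1 : ZMod n) - (d2 : ZMod n))
        = a' - (d2 : ZMod n) by ring,
      show a + (d1 : ZMod n) + (d2 : ZMod n) + (a' - a - (d1 : ZMod n) - (d2 : ZMod n))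
        = a' by ring,
      show a' + (-(d1 : ZMod n) - (d2 : ZMod n)) = a' - (d1 : ZMod n) - (d2 : ZMod n) by ring,
      show a' - (d1 : ZMod n) - (d2 : ZMod n) + (d1 : ZMod n) = a' - (d2 : ZMod n) by ring]
    ext w; simp only [Finset.mem_insert, Finset.mem_singleton]; tauto
  · refine Or.inr ⟨a' + a + (d1 : ZMod n) + (d2 : ZMod n), ?_⟩
    simp only [Finset.image_insert, Finset.image_singleton]
    rw [hb, hc, hb', hc',
      show a' + a + (d1 : ZMod n) + (d2 : ZMod n) - a
        = a' + (d1 : ZMod n) + (d2 : ZMod n) by ring,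
      show a' + a + (d1 : ZMod n) + (d2 : ZMod n) - (a + (d1 : ZMod n))
        = a' + (d2 : ZMod n) by ring,
      show a' + a + (d1 : ZMod n) + (d2 : ZMod n) - (a + (d1 : ZMod n) + (d2 : ZMod n))
        = a' by ring,
      show a' + (d2 : ZMod n) + (d1 : ZMod n) = a' + (d1 : ZMod n) + (d2 : ZMod n) by ring]
    ext w; simp only [Finset.mem_insert, Finset.mem_singleton]; tauto
  · refine Or.inr ⟨a' + a + (d1 : ZMod n), ?_⟩
    simp only [Finset.image_insert, Finset.image_singleton]
    rw [hb, hc, hb', hc', hd3,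
      show a' + a + (d1 : ZMod n) - a = a' + (d1 : ZMod n) by ring,
      show a' + a + (d1 : ZMod n) - (a + (d1 : ZMod n)) = a' by ring,
      show a' + a + (d1 : ZMod n) - (a + (d1 : ZMod n) + (d2 : ZMod n))
        = a' - (d2 : ZMod n) by ring,
      show a' + (d1 : ZMod n) + (-(d1 : ZMod n) - (d2 : ZMod n)) = a' - (d2 : ZMod n) by ring]
    ext w; simp only [Finset.mem_insert, Finset.mem_singleton]; tauto
  · refine Or.inr ⟨a' + a, ?_⟩
    simp only [Finset.image_insert, Finset.image_singleton]
    rw [hb, hc, hb', hc', hd3,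
      show a' + a - a = a' by ring,
      show a' + a - (a + (d1 : ZMod n)) = a' - (d1 : ZMod n) by ring,
      show a' + a - (a + (d1 : ZMod n) + (d2 : ZMod n))
        = a' - (d1 : ZMod n) - (d2 : ZMod n) by ring,
      show a' + (-(d1 : ZMod n) - (d2 : ZMod n)) = a' - (d1 : ZMod n) - (d2 : ZMod n) by ring,
      show a' - (d1 : ZMod n) - (d2 : ZMod n) + (d2 : ZMod n) = a' - (d1 : ZMod n) by ring]
    ext w; simp only [Finset.mem_insert, Finset.mem_singleton]; tauto
end

section
/- Scaling Theorem: Let d ≥ 1, m ≥ 3. If P_1, P_2 ⊆ Z_m form a Z-related pair (equal interval-class multisets, not related by any transposition or inversion), then dP_1 and dP_2 form a Z-related pair in Z_{dm}. -/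
/-- `P` and `Q` are related by a transposition `p ↦ p + t`. -/
def TranspRel (n : ℕ) (P Q : Finset (ZMod n)) : Prop :=
  ∃ t : ZMod n, P.image (fun p => p + t) = Q

/-- `P` and `Q` are related by an inversion `p ↦ s - p`. -/
def InvRel (n : ℕ) (P Q : Finset (ZMod n)) : Prop :=
  ∃ s : ZMod n, P.image (fun p => s - p) = Q

/-- `P` and `Q` are Z-related: equal interval-class multisets, but not related by
any transposition or inversion. -/
def ZRelated (n : ℕ) (P Q : Finset (ZMod n)) : Prop :=
  intervalMultiset n P = intervalMultiset n Q ∧ ¬ TranspRel n P Q ∧ ¬ InvRel n P Q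

/-- The scaling map on sets: `dP = {dp : p ∈ P} ⊆ ZMod (d*m)`. -/
def scaleSet (d m : ℕ) (P : Finset (ZMod m)) : Finset (ZMod (d * m)) :=
  P.image fun p => ((d * p.val : ℕ) : ZMod (d * m))

/-- The scaling map on elements. -/
def phi (d m : ℕ) (p : ZMod m) : ZMod (d * m) := ((d * p.val : ℕ) : ZMod (d * m))

lemma scaleSet_eq_image_phi (d m : ℕ) (P : Finset (ZMod m)) :
    scaleSet d m P = P.image (phi d m) := rfl

lemma phi_mod (d m x : ℕ) : ((d * (x % m) : ℕ) : ZMod (d * m)) = ((d * x : ℕ) : ZMod (d * m)) := by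
  have h : d * x = d * m * (x / m) + d * (x % m) := by
    conv_lhs => rw [← Nat.div_add_mod x m]
    ring
  rw [h]
  push_cast
  rw [show ((d:ZMod (d*m)) * m = ((d*m : ℕ) : ZMod (d*m))) by push_cast; ring, ZMod.natCast_self]
  ring

lemma phi_add (d m : ℕ) [NeZero m] (a b : ZMod m) :
    phi d m (a + b) = phi d m a + phi d m b := by
  simp only [phi, ZMod.val_add, phi_mod]
  push_cast
  ring

lemma phi_sub (d m : ℕ) [NeZero m] (a b : ZMod m) :
    phi d m (a - b) = phi d m a - phi d m b := by
  have := phi_add d m (a - b) b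
  simp at this
  rw [this]; ring

lemma phi_val (d m : ℕ) (hd : 1 ≤ d) [NeZero m] (a : ZMod m) :
    (phi d m a).val = d * a.val := by
  haveI : NeZero (d * m) := ⟨Nat.mul_ne_zero (by omega) (NeZero.ne m)⟩
  exact ZMod.val_cast_of_lt (by
    have := ZMod.val_lt a
    exact Nat.mul_lt_mul_of_le_of_lt (le_refl d) this (by omega))

lemma phi_inj (d m : ℕ) (hd : 1 ≤ d) [NeZero m] : Function.Injective (phi d m) := by
  intro a b hab
  have : (phi d m a).val = (phi d m b).val := by rw [hab]
  rw [phi_val d m hd, phi_val d m hd] at this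
  have : a.val = b.val := Nat.eq_of_mul_eq_mul_left (by omega) this
  exact ZMod.val_injective m this

lemma ic_phi (d m : ℕ) (hd : 1 ≤ d) [NeZero m] (p q : ZMod m) :
    ic (d * m) (phi d m p) (phi d m q) = d * ic m p q := by
  unfold ic
  rw [← phi_sub, phi_val d m hd]
  have hr : (p - q).val < m := ZMod.val_lt _
  set r := (p - q).val with hrdef
  have hms : d * (m - r) = d * m - d * r := Nat.mul_sub d m r
  rcases le_total r (m - r) with h1 | h1
  · rw [min_eq_left h1, min_eq_left (by
      calc d * r ≤ d * (m - r) := Nat.mul_le_mul_left d h1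
      _ = d * m - d * r := hms)]
  · rw [min_eq_right h1, min_eq_right (by
      have h2 : d * (m - r) ≤ d * r := Nat.mul_le_mul_left d h1
      omega), ← hms]

lemma interval_scale (d m : ℕ) (hd : 1 ≤ d) [NeZero m] (P : Finset (ZMod m)) :
    intervalMultiset (d * m) (scaleSet d m P) = (intervalMultiset m P).map (fun k => d * k) := by
  have hinj := phi_inj d m hd
  have hfilter : ((scaleSet d m P ×ˢ scaleSet d m P).filter fun x => x.1.val < x.2.val)
      = ((P ×ˢ P).filter fun x => x.1.val < x.2.val).image (Prod.map (phi d m) (phi d m)) := by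
    ext ⟨a, b⟩
    simp only [Finset.mem_filter, Finset.mem_product, Finset.mem_image, scaleSet_eq_image_phi,
      Prod.ext_iff, Prod.map, Prod.exists]
    constructor
    · rintro ⟨⟨ha, hb⟩, hlt⟩
      obtain ⟨p, hp, rfl⟩ := ha
      obtain ⟨q, hq, rfl⟩ := hb
      refine ⟨p, q, ⟨⟨hp, hq⟩, ?_⟩, rfl, rfl⟩
      rw [phi_val d m hd, phi_val d m hd] at hlt
      exact Nat.lt_of_mul_lt_mul_left hlt
    · rintro ⟨p, q, ⟨⟨hp, hq⟩, hlt⟩, rfl, rfl⟩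
      refine ⟨⟨⟨p, hp, rfl⟩, ⟨q, hq, rfl⟩⟩, ?_⟩
      rw [phi_val d m hd, phi_val d m hd]
      exact Nat.mul_lt_mul_of_le_of_lt (le_refl d) hlt (by omega)
  unfold intervalMultiset
  rw [hfilter, Finset.image_val_of_injOn
    (Function.Injective.injOn (Prod.map_injective.mpr ⟨hinj, hinj⟩)),
    Multiset.map_map, Multiset.map_map]
  apply Multiset.map_congr rfl
  intro x _
  exact ic_phi d m hd x.1 x.2

/-- Scaling Theorem: scaling a Z-related pair in `ZMod m` by `d` yields a
Z-related pair in `ZMod (d*m)`. -/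
theorem scaling_theorem (d m : ℕ) (hd : 1 ≤ d) (hm : 3 ≤ m)
    (P1 P2 : Finset (ZMod m)) (h : ZRelated m P1 P2) :
    ZRelated (d * m) (scaleSet d m P1) (scaleSet d m P2) := by
  haveI : NeZero m := ⟨by omega⟩
  obtain ⟨hic, htr, hinv⟩ := h
  have hinj := phi_inj d m hd
  refine ⟨?_, ?_, ?_⟩
  · rw [interval_scale d m hd, interval_scale d m hd, hic]
  · rintro ⟨t, ht⟩
    apply htr
    rcases P1.eq_empty_or_nonempty with rfl | ⟨p₀, hp₀⟩
    · have : P2 = ∅ := by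
        have h2 : scaleSet d m P2 = ∅ := by
          rw [← ht]; simp [scaleSet]
        rw [scaleSet_eq_image_phi] at h2
        exact Finset.image_eq_empty.mp h2
      exact ⟨0, by simp [this]⟩
    · have hmem : phi d m p₀ + t ∈ scaleSet d m P2 := by
        rw [← ht]
        exact Finset.mem_image.mpr ⟨phi d m p₀,
          Finset.mem_image.mpr ⟨p₀, hp₀, rfl⟩, rfl⟩
      rw [scaleSet_eq_image_phi] at hmem
      obtain ⟨q₀, _, hq₀⟩ := Finset.mem_image.mp hmem
      have hteq : t = phi d m (q₀ - p₀) := by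
        rw [phi_sub, hq₀]; ring
      refine ⟨q₀ - p₀, ?_⟩
      apply Finset.image_injective hinj
      rw [Finset.image_image, ← scaleSet_eq_image_phi, ← ht, scaleSet_eq_image_phi,
        Finset.image_image]
      apply Finset.image_congr
      intro p _
      simp only [Function.comp]
      rw [phi_add, hteq]
  · rintro ⟨s, hs⟩
    apply hinv
    rcases P1.eq_empty_or_nonempty with rfl | ⟨p₀, hp₀⟩
    · have : P2 = ∅ := by
        have h2 : scaleSet d m P2 = ∅ := by
          rw [← hs]; simp [scaleSet]
        rw [scaleSet_eq_image_phi] at h2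
        exact Finset.image_eq_empty.mp h2
      exact ⟨0, by simp [this]⟩
    · have hmem : s - phi d m p₀ ∈ scaleSet d m P2 := by
        rw [← hs]
        exact Finset.mem_image.mpr ⟨phi d m p₀,
          Finset.mem_image.mpr ⟨p₀, hp₀, rfl⟩, rfl⟩
      rw [scaleSet_eq_image_phi] at hmem
      obtain ⟨q₀, _, hq₀⟩ := Finset.mem_image.mp hmem
      have hseq : s = phi d m (q₀ + p₀) := by
        rw [phi_add, hq₀]; ring
      refine ⟨q₀ + p₀, ?_⟩
      apply Finset.image_injective hinj
      rw [Finset.image_image, ← scaleSet_eq_image_phi, ← hs, scaleSet_eq_image_phi,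
        Finset.image_image]
      apply Finset.image_congr
      intro p _
      simp only [Function.comp]
      rw [phi_sub, hseq]
end

section
/- Inheritance: If m divides n, m ≥ 3, and Z_m contains a Z-related pair of k-element sets, then Z_n contains a Z-related pair of k-element sets. -/
lemma intervalMultiset_image {m n : ℕ} (c : ℕ) (f : ZMod m → ZMod n)
    (hf : Function.Injective f)
    (hval : ∀ p q : ZMod m, ((f p).val < (f q).val ↔ p.val < q.val))
    (hic : ∀ p q : ZMod m, ic n (f p) (f q) = c * ic m p q)
    (P : Finset (ZMod m)) :
    intervalMultiset n (P.image f) = (intervalMultiset m P).map (c * ·) := by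
  classical
  have hprod : (P.image f) ×ˢ (P.image f) = (P ×ˢ P).image (Prod.map f f) := by
    ext ⟨a, b⟩
    simp only [Finset.mem_product, Finset.mem_image, Prod.exists, Prod.map, Prod.mk.injEq]
    constructor
    · rintro ⟨⟨x, hx, rfl⟩, ⟨y, hy, rfl⟩⟩; exact ⟨x, y, ⟨hx, hy⟩, rfl, rfl⟩
    · rintro ⟨x, y, ⟨hx, hy⟩, rfl, rfl⟩; exact ⟨⟨x, hx, rfl⟩, ⟨y, hy, rfl⟩⟩
  have hinj2 : Function.Injective (Prod.map f f) := hf.prodMap hf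
  unfold intervalMultiset
  rw [hprod, Finset.filter_image]
  have hfilter : ((P ×ˢ P).filter fun a => ((Prod.map f f a).1.val < (Prod.map f f a).2.val))
      = (P ×ˢ P).filter fun x => x.1.val < x.2.val := by
    apply Finset.filter_congr; intro x _; simpa using (hval x.1 x.2)
  rw [hfilter, Finset.image_val_of_injOn (hinj2.injOn), Multiset.map_map, Multiset.map_map]
  exact Multiset.map_congr rfl fun x _ => by
    simpa [Prod.map] using hic x.1 x.2

section Scale

variable {m n d : ℕ} [NeZero m]

/-- The scaling map on elements. -/
noncomputable def sc (n m d : ℕ) : ZMod m → ZMod n := fun p => ((d * p.val : ℕ) : ZMod n)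

lemma sc_val (hn : n = d * m) (hd : 0 < d) (p : ZMod m) : (sc n m d p).val = d * p.val := by
  have : d * p.val < n := by
    rw [hn]; exact (Nat.mul_lt_mul_left hd).mpr (ZMod.val_lt p)
  exact ZMod.val_cast_of_lt this

lemma sc_inj (hn : n = d * m) (hd : 0 < d) : Function.Injective (sc n m d) := by
  intro p q h
  have := congrArg ZMod.val h
  rw [sc_val hn hd, sc_val hn hd] at this
  exact ZMod.val_injective m (Nat.eq_of_mul_eq_mul_left hd this)

lemma sc_sub (hn : n = d * m) (p q : ZMod m) :
    sc n m d p - sc n m d q = sc n m d (p - q) := by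
  have hm : ((m : ℤ)) ∣ (((p - q).val : ℤ) - ((p.val : ℤ) - (q.val : ℤ))) := by
    rw [← ZMod.intCast_zmod_eq_zero_iff_dvd]
    push_cast [ZMod.natCast_zmod_val]
    ring
  have hdvd : ((n : ℕ) : ℤ) ∣ (d : ℤ) * (((p - q).val : ℤ) - ((p.val : ℤ) - (q.val : ℤ))) := by
    rw [hn]; push_cast; exact mul_dvd_mul_left _ hm
  have h0 : (((d : ℤ) * (((p - q).val : ℤ) - ((p.val : ℤ) - (q.val : ℤ))) : ℤ) : ZMod n) = 0 := by
    rw [ZMod.intCast_zmod_eq_zero_iff_dvd]; exact hdvd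
  have key : sc n m d (p - q) - (sc n m d p - sc n m d q) = 0 := by
    unfold sc
    push_cast at h0 ⊢
    linear_combination h0
  exact (sub_eq_zero.mp key).symm

lemma sc_add (hn : n = d * m) (p q : ZMod m) :
    sc n m d (p + q) = sc n m d p + sc n m d q := by
  have := sc_sub hn (p + q) q
  rw [add_sub_cancel_right] at this
  rw [sub_eq_iff_eq_add] at this
  rw [this, add_comm]

lemma sc_ic (hn : n = d * m) (hd : 0 < d) (p q : ZMod m) :
    ic n (sc n m d p) (sc n m d q) = d * ic m p q := by
  unfold ic
  rw [sc_sub hn, sc_val hn hd, hn, ← Nat.mul_sub, min_mul_mul_left]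

end Scale

/-- Inheritance: if `m ∣ n`, a Z-related pair of `k`-element sets in `ZMod m`
yields a Z-related pair of `k`-element sets in `ZMod n`. -/
theorem inheritance (m n k : ℕ) (hm : 3 ≤ m) (hdvd : m ∣ n)
    (P1 P2 : Finset (ZMod m)) (h1 : P1.card = k) (h2 : P2.card = k)
    (h : ZRelated m P1 P2) :
    ∃ Q1 Q2 : Finset (ZMod n), Q1.card = k ∧ Q2.card = k ∧ ZRelated n Q1 Q2 := by
  classical
  have : NeZero m := ⟨by omega⟩
  -- k ≥ 1
  have hk : 1 ≤ k := by
    by_contra hk0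
    have hk0 : k = 0 := by omega
    have e1 : P1 = ∅ := Finset.card_eq_zero.mp (by omega)
    have e2 : P2 = ∅ := Finset.card_eq_zero.mp (by omega)
    exact h.2.1 ⟨0, by simp [e1, e2]⟩
  rcases Nat.eq_zero_or_pos n with hn0 | hnpos
  · -- n = 0 : lift via val
    subst hn0
    set f : ZMod m → ZMod 0 := fun p => ((p.val : ℕ) : ZMod 0) with hf_def
    have hfinj : Function.Injective f := by
      intro p q hpq
      have : ((p.val : ℤ)) = ((q.val : ℤ)) := hpq
      exact ZMod.val_injective m (by exact_mod_cast this)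
    have hfval : ∀ p : ZMod m, (f p).val = p.val := fun p => Int.natAbs_natCast _
    have hic0 : ∀ p q : ZMod m, ic 0 (f p) (f q) = 0 * ic m p q := by
      intro p q; simp [ic]
    have hval : ∀ p q : ZMod m, ((f p).val < (f q).val ↔ p.val < q.val) := by
      intro p q; rw [hfval, hfval]
    set r : ZMod 0 →+* ZMod m := ZMod.castHom (dvd_zero m) (ZMod m) with hr_def
    have hrf : ∀ p : ZMod m, r (f p) = p := by
      intro p
      show r ((p.val : ℕ) : ZMod 0) = p
      rw [map_natCast, ZMod.natCast_zmod_val]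
    have key : ∀ (P : Finset (ZMod m)), (P.image f).image r = P := by
      intro P
      rw [Finset.image_image]
      have : (↑r ∘ f) = id := funext fun p => hrf p
      rw [this, Finset.image_id]
    refine ⟨P1.image f, P2.image f, by rw [Finset.card_image_of_injective _ hfinj, h1],
      by rw [Finset.card_image_of_injective _ hfinj, h2], ?_, ?_, ?_⟩
    · rw [intervalMultiset_image 0 f hfinj hval hic0,
        intervalMultiset_image 0 f hfinj hval hic0, h.1]
    · rintro ⟨t, ht⟩
      apply h.2.1
      refine ⟨r t, ?_⟩
      have h' := congrArg (Finset.image r) ht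
      rw [key] at h'
      rw [Finset.image_image, Finset.image_image] at h'
      rw [← h']
      apply Finset.image_congr
      intro p _
      simp [Function.comp, map_add, hrf]
    · rintro ⟨s, hs⟩
      apply h.2.2
      refine ⟨r s, ?_⟩
      have h' := congrArg (Finset.image r) hs
      rw [key] at h'
      rw [Finset.image_image, Finset.image_image] at h'
      rw [← h']
      apply Finset.image_congr
      intro p _
      simp [Function.comp, map_sub, hrf]
  · -- n > 0 : scale by d = n / m
    obtain ⟨d, hd'⟩ := hdvd
    have hn : n = d * m := by rw [hd', Nat.mul_comm]
    have hd : 0 < d := Nat.pos_of_ne_zero (fun h0 => by rw [h0, zero_mul] at hn; omega)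
    set f : ZMod m → ZMod n := sc n m d with hf_def
    have hfinj : Function.Injective f := sc_inj hn hd
    have hval : ∀ p q : ZMod m, ((f p).val < (f q).val ↔ p.val < q.val) := by
      intro p q
      rw [hf_def, sc_val hn hd, sc_val hn hd]
      exact Nat.mul_lt_mul_left hd
    have hic : ∀ p q : ZMod m, ic n (f p) (f q) = d * ic m p q := fun p q => sc_ic hn hd p q
    have hP1ne : P1.Nonempty := Finset.card_pos.mp (by omega)
    refine ⟨P1.image f, P2.image f, by rw [Finset.card_image_of_injective _ hfinj, h1],
      by rw [Finset.card_image_of_injective _ hfinj, h2], ?_, ?_, ?_⟩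
    · rw [intervalMultiset_image d f hfinj hval hic,
        intervalMultiset_image d f hfinj hval hic, h.1]
    · rintro ⟨t, ht⟩
      apply h.2.1
      obtain ⟨p, hp⟩ := hP1ne
      have hmem : f p + t ∈ P2.image f := by
        rw [← ht]
        exact Finset.mem_image_of_mem _ (Finset.mem_image_of_mem f hp)
      obtain ⟨q, hq, hfq⟩ := Finset.mem_image.mp hmem
      have ht' : t = f (q - p) := by
        rw [hf_def, ← sc_sub hn]
        linear_combination -hfq
      refine ⟨q - p, Finset.image_injective hfinj ?_⟩
      rw [Finset.image_image, ← ht]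
      rw [Finset.image_image]
      apply Finset.image_congr
      intro x _
      show f (x + (q - p)) = f x + t
      rw [ht', hf_def, sc_add hn]
    · rintro ⟨s, hs⟩
      apply h.2.2
      obtain ⟨p, hp⟩ := hP1ne
      have hmem : s - f p ∈ P2.image f := by
        rw [← hs]
        exact Finset.mem_image_of_mem _ (Finset.mem_image_of_mem f hp)
      obtain ⟨q, hq, hfq⟩ := Finset.mem_image.mp hmem
      have hs' : s = f (q + p) := by
        rw [hf_def, sc_add hn]
        linear_combination -hfq
      refine ⟨q + p, Finset.image_injective hfinj ?_⟩
      rw [Finset.image_image, ← hs]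
      rw [Finset.image_image]
      apply Finset.image_congr
      intro x _
      show f ((q + p) - x) = s - f x
      rw [hs', hf_def, ← sc_sub hn]
end

section
/- Let n be divisible by 4, n ≥ 8, m = n/2, and 1 ≤ a < m/2. The sets P_1 = {0, a, m/2, m+a} and P_2 = {0, a, a + m/2, m} in Z_n have equal interval-class multisets, both equal to {{a, m/2 - a, m/2, m/2 + a, m - a, m}}. -/
/-- The interval multiset of a 4-element set listed in increasing `val` order. -/
theorem im4 (n : ℕ) (p0 p1 p2 p3 : ZMod n) (h01 : p0.val < p1.val)
    (h12 : p1.val < p2.val) (h23 : p2.val < p3.val) :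
    intervalMultiset n {p0, p1, p2, p3} =
      {ic n p2 p3, ic n p1 p3, ic n p0 p3, ic n p0 p2, ic n p1 p2, ic n p0 p1} := by
  have h02 := h01.trans h12
  have h13 := h12.trans h23
  have h03 := h02.trans h23
  have e01 : p0 ≠ p1 := fun h => by simp [h] at h01
  have e02 : p0 ≠ p2 := fun h => by simp [h] at h02
  have e03 : p0 ≠ p3 := fun h => by simp [h] at h03
  have e12 : p1 ≠ p2 := fun h => by simp [h] at h12
  have e13 : p1 ≠ p3 := fun h => by simp [h] at h13
  have e23 : p2 ≠ p3 := fun h => by simp [h] at h23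
  unfold intervalMultiset
  rw [Finset.filter_val, Finset.product_val]
  rw [Finset.insert_val_of_notMem (by simp [e01, e02, e03]),
      Finset.insert_val_of_notMem (by simp [e12, e13]),
      Finset.insert_val_of_notMem (by simp [e23])]
  simp [Finset.singleton_val, Multiset.cons_product, Multiset.product_cons,
    Multiset.filter_cons, Multiset.filter_singleton, h01, h02, h03, h12, h13, h23,
    not_lt.2 h01.le, not_lt.2 h02.le, not_lt.2 h03.le, not_lt.2 h12.le,
    not_lt.2 h13.le, not_lt.2 h23.le]

lemma permA (x1 x2 x3 x4 x5 x6 : ℕ) :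
    ({x4,x6,x5,x3,x2,x1} : Multiset ℕ) = {x1,x2,x3,x4,x5,x6} := by
  simp only [Multiset.insert_eq_cons, ← Multiset.singleton_add]
  abel

lemma permB (x1 x2 x3 x4 x5 x6 : ℕ) :
    ({x2,x5,x6,x4,x3,x1} : Multiset ℕ) = {x1,x2,x3,x4,x5,x6} := by
  simp only [Multiset.insert_eq_cons, ← Multiset.singleton_add]
  abel

lemma ic_coe (n x y : ℕ) [NeZero n] (hxy : x < y) (hy : y < n) :
    ic n (x : ZMod n) (y : ZMod n) = min (y - x) (n - (y - x)) := by
  have h1 : ((x + (n - y) : ℕ) : ZMod n) = (x : ZMod n) - y := by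
    push_cast [Nat.cast_sub hy.le]
    simp [ZMod.natCast_self]
    ring
  rw [ic, ← h1, ZMod.val_natCast, Nat.mod_eq_of_lt (by omega)]
  omega

set_option maxHeartbeats 2000000 in
/-- The two sets of the general `k = 4` construction share the interval-class
multiset `{{a, m/2 - a, m/2, m/2 + a, m - a, m}}`, where `m = n/2`. -/
theorem k4_interval_multisets (n : ℕ) (h4 : 4 ∣ n) (hn : 8 ≤ n) (a : ℕ)
    (ha1 : 1 ≤ a) (ha2 : a < n / 2 / 2) :
    intervalMultiset n
        ({(0 : ZMod n), (a : ZMod n), ((n / 2 / 2 : ℕ) : ZMod n),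
          ((n / 2 + a : ℕ) : ZMod n)} : Finset (ZMod n))
      = ({a, n / 2 / 2 - a, n / 2 / 2, n / 2 / 2 + a, n / 2 - a, n / 2} : Multiset ℕ) ∧
    intervalMultiset n
        ({(0 : ZMod n), (a : ZMod n), ((a + n / 2 / 2 : ℕ) : ZMod n),
          ((n / 2 : ℕ) : ZMod n)} : Finset (ZMod n))
      = ({a, n / 2 / 2 - a, n / 2 / 2, n / 2 / 2 + a, n / 2 - a, n / 2} : Multiset ℕ) := by
  obtain ⟨t, rfl⟩ := h4
  haveI : NeZero (4 * t) := ⟨by omega⟩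
  have ht : 2 ≤ t := by omega
  have hat : a < t := by omega
  have e1 : 4 * t / 2 / 2 = t := by omega
  have e2 : 4 * t / 2 = 2 * t := by omega
  have z : (0 : ZMod (4 * t)) = ((0 : ℕ) : ZMod (4 * t)) := by norm_num
  have val0 : ((0 : ℕ) : ZMod (4 * t)).val = 0 := by
    rw [ZMod.val_natCast, Nat.mod_eq_of_lt (by omega)]
  have vala : ((a : ℕ) : ZMod (4 * t)).val = a := by
    rw [ZMod.val_natCast, Nat.mod_eq_of_lt (by omega)]
  have valt : ((t : ℕ) : ZMod (4 * t)).val = t := by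
    rw [ZMod.val_natCast, Nat.mod_eq_of_lt (by omega)]
  have valat : ((a + t : ℕ) : ZMod (4 * t)).val = a + t := by
    rw [ZMod.val_natCast, Nat.mod_eq_of_lt (by omega)]
  have val2t : ((2 * t : ℕ) : ZMod (4 * t)).val = 2 * t := by
    rw [ZMod.val_natCast, Nat.mod_eq_of_lt (by omega)]
  have val2ta : ((2 * t + a : ℕ) : ZMod (4 * t)).val = 2 * t + a := by
    rw [ZMod.val_natCast, Nat.mod_eq_of_lt (by omega)]
  have e3 : 2 * t / 2 = t := by omega
  simp only [e1, e2, e3]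
  constructor
  · rw [z, im4 (4 * t) _ _ _ _ (by omega) (by omega) (by omega),
      ic_coe _ t (2 * t + a) (by omega) (by omega),
      ic_coe _ a (2 * t + a) (by omega) (by omega),
      ic_coe _ 0 (2 * t + a) (by omega) (by omega),
      ic_coe _ 0 t (by omega) (by omega),
      ic_coe _ a t (by omega) (by omega),
      ic_coe _ 0 a (by omega) (by omega),
      show min (2 * t + a - t) (4 * t - (2 * t + a - t)) = t + a by omega,
      show min (2 * t + a - a) (4 * t - (2 * t + a - a)) = 2 * t by omega,
      show min (2 * t + a - 0) (4 * t - (2 * t + a - 0)) = 2 * t - a by omega,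
      show min (t - 0) (4 * t - (t - 0)) = t by omega,
      show min (t - a) (4 * t - (t - a)) = t - a by omega,
      show min (a - 0) (4 * t - (a - 0)) = a by omega]
    exact permA a (t - a) t (t + a) (2 * t - a) (2 * t)
  · rw [z, im4 (4 * t) _ _ _ _ (by omega) (by omega) (by omega),
      ic_coe _ (a + t) (2 * t) (by omega) (by omega),
      ic_coe _ a (2 * t) (by omega) (by omega),
      ic_coe _ 0 (2 * t) (by omega) (by omega),
      ic_coe _ 0 (a + t) (by omega) (by omega),
      ic_coe _ a (a + t) (by omega) (by omega),
      ic_coe _ 0 a (by omega) (by omega),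
      show min (2 * t - (a + t)) (4 * t - (2 * t - (a + t))) = t - a by omega,
      show min (2 * t - a) (4 * t - (2 * t - a)) = 2 * t - a by omega,
      show min (2 * t - 0) (4 * t - (2 * t - 0)) = 2 * t by omega,
      show min (a + t - 0) (4 * t - (a + t - 0)) = t + a by omega,
      show min (a + t - a) (4 * t - (a + t - a)) = t by omega,
      show min (a - 0) (4 * t - (a - 0)) = a by omega]
    exact permB a (t - a) t (t + a) (2 * t - a) (2 * t)
end

section
/- For every q ≥ 2, the sets P_1 = {0, 1, q, 2q+1} and P_2 = {0, 1, q+1, 2q} in Z_{4q} form a Z-related pair: they have equal interval-class multisets and are not related by any transposition or inversion of Z_{4q}. -/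
lemma sub_val' {n u v : ℕ} (h1 : u < v) (h2 : v < n) :
    ((u : ZMod n) - (v : ZMod n)).val = n - (v - u) := by
  haveI : NeZero n := ⟨by omega⟩
  have h3 : ((u : ZMod n) - (v : ZMod n)) = ((n - (v - u) : ℕ) : ZMod n) := by
    push_cast [Nat.cast_sub (by omega : v - u ≤ n), Nat.cast_sub (le_of_lt h1)]
    simp [ZMod.natCast_self]
  rw [h3, ZMod.val_cast_of_lt (by omega)]

lemma ic_cast' {n u v : ℕ} (h1 : u < v) (h2 : v < n) :
    ic n (u : ZMod n) (v : ZMod n) = min (v - u) (n - (v - u)) := by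
  unfold ic
  rw [sub_val' h1 h2]
  omega

lemma cast_inj' {n u v : ℕ} (hu : u < n) (hv : v < n) :
    ((u : ZMod n) = (v : ZMod n)) ↔ u = v := by
  haveI : NeZero n := ⟨by omega⟩
  constructor
  · intro h
    have := congrArg ZMod.val h
    rwa [ZMod.val_cast_of_lt hu, ZMod.val_cast_of_lt hv] at this
  · rintro rfl; rfl

lemma filter_prod_quad {n : ℕ} (a b c d : ZMod n)
    (hab : a.val < b.val) (hbc : b.val < c.val) (hcd : c.val < d.val) :
    ((({a,b,c,d} : Finset (ZMod n)) ×ˢ {a,b,c,d}).filter fun x => x.1.val < x.2.val)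
      = {(a,b),(a,c),(a,d),(b,c),(b,d),(c,d)} := by
  ext ⟨x, y⟩
  simp only [Finset.mem_filter, Finset.mem_product, Finset.mem_insert, Finset.mem_singleton,
    Prod.mk.injEq]
  constructor
  · rintro ⟨⟨hx, hy⟩, hlt⟩
    rcases hx with rfl|rfl|rfl|rfl <;> rcases hy with rfl|rfl|rfl|rfl <;>
      first | omega | tauto
  · rintro (⟨rfl,rfl⟩|⟨rfl,rfl⟩|⟨rfl,rfl⟩|⟨rfl,rfl⟩|⟨rfl,rfl⟩|⟨rfl,rfl⟩) <;>
      exact ⟨⟨by tauto, by tauto⟩, by omega⟩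

lemma intervalMultiset_quad {n : ℕ} (a b c d : ZMod n)
    (hab : a.val < b.val) (hbc : b.val < c.val) (hcd : c.val < d.val) :
    intervalMultiset n {a,b,c,d} =
      {ic n a b, ic n a c, ic n a d, ic n b c, ic n b d, ic n c d} := by
  have hne : ∀ (x y : ZMod n) (u v : ZMod n), x.val ≠ u.val → (x,y) ≠ (u,v) := by
    intro x y u v h he
    rw [Prod.ext_iff] at he
    exact h (congrArg ZMod.val he.1)
  have hne2 : ∀ (x y : ZMod n) (u v : ZMod n), y.val ≠ v.val → (x,y) ≠ (u,v) := by
    intro x y u v h he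
    rw [Prod.ext_iff] at he
    exact h (congrArg ZMod.val he.2)
  unfold intervalMultiset
  rw [filter_prod_quad a b c d hab hbc hcd]
  have h1 : (({(a,b),(a,c),(a,d),(b,c),(b,d),(c,d)} : Finset (ZMod n × ZMod n))).val
      = (a,b) ::ₘ (a,c) ::ₘ (a,d) ::ₘ (b,c) ::ₘ (b,d) ::ₘ {(c,d)} := by
    rw [Finset.insert_val_of_notMem (by
        simp only [Finset.mem_insert, Finset.mem_singleton, not_or]
        refine ⟨hne2 _ _ _ _ (by omega), hne2 _ _ _ _ (by omega), hne _ _ _ _ (by omega),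
          hne _ _ _ _ (by omega), hne _ _ _ _ (by omega)⟩),
      Finset.insert_val_of_notMem (by
        simp only [Finset.mem_insert, Finset.mem_singleton, not_or]
        refine ⟨hne2 _ _ _ _ (by omega), hne _ _ _ _ (by omega), hne _ _ _ _ (by omega),
          hne _ _ _ _ (by omega)⟩),
      Finset.insert_val_of_notMem (by
        simp only [Finset.mem_insert, Finset.mem_singleton, not_or]
        refine ⟨hne _ _ _ _ (by omega), hne _ _ _ _ (by omega), hne _ _ _ _ (by omega)⟩),
      Finset.insert_val_of_notMem (by
        simp only [Finset.mem_insert, Finset.mem_singleton, not_or]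
        refine ⟨hne2 _ _ _ _ (by omega), hne2 _ _ _ _ (by omega)⟩),
      Finset.insert_val_of_notMem (by
        simp only [Finset.mem_singleton]
        exact hne _ _ _ _ (by omega))]
    rfl
  rw [h1]
  simp only [Multiset.map_cons, Multiset.map_singleton]
  rfl

lemma notinB {q : ℕ} (hq : 2 ≤ q) (c : ℕ) (hc : c < 4*q) (h0 : c ≠ 0) (h1 : c ≠ 1)
    (h2 : c ≠ q+1) (h3 : c ≠ 2*q) :
    ((c : ZMod (4*q)) ∉ ({(0 : ZMod (4 * q)), ((1 : ℕ) : ZMod (4 * q)),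
      ((q + 1 : ℕ) : ZMod (4 * q)), ((2 * q : ℕ) : ZMod (4 * q))} : Finset (ZMod (4 * q)))) := by
  simp only [Finset.mem_insert, Finset.mem_singleton, not_or]
  refine ⟨?_, ?_, ?_, ?_⟩
  · intro h
    exact h0 ((cast_inj' hc (by omega)).mp (by rw [h]; simp))
  · intro h; exact h1 ((cast_inj' hc (by omega)).mp h)
  · intro h; exact h2 ((cast_inj' hc (by omega)).mp h)
  · intro h; exact h3 ((cast_inj' hc (by omega)).mp h)

/-- The `4m` family: for every `q ≥ 2`, the sets `{0, 1, q, 2q+1}` and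
`{0, 1, q+1, 2q}` in `ZMod (4q)` form a Z-related pair. -/
theorem fourM_family_Z_related (q : ℕ) (hq : 2 ≤ q) :
    ZRelated (4 * q)
      ({(0 : ZMod (4 * q)), ((1 : ℕ) : ZMod (4 * q)), ((q : ℕ) : ZMod (4 * q)),
        ((2 * q + 1 : ℕ) : ZMod (4 * q))} : Finset (ZMod (4 * q)))
      ({(0 : ZMod (4 * q)), ((1 : ℕ) : ZMod (4 * q)), ((q + 1 : ℕ) : ZMod (4 * q)),
        ((2 * q : ℕ) : ZMod (4 * q))} : Finset (ZMod (4 * q))) := by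
  haveI : NeZero (4*q) := ⟨by omega⟩
  have h4 : (4 : ZMod (4*q)) * (q : ℕ) = 0 := by
    have h := ZMod.natCast_self (4*q)
    push_cast at h
    linear_combination h
  have hv : ∀ u : ℕ, u < 4*q → ((u : ZMod (4*q))).val = u := fun u h => ZMod.val_cast_of_lt h
  refine ⟨?_, ?_, ?_⟩
  · -- equal interval multisets
    rw [show (0 : ZMod (4*q)) = ((0:ℕ) : ZMod (4*q)) from (Nat.cast_zero).symm]
    rw [intervalMultiset_quad ((0:ℕ) : ZMod (4*q)) ((1:ℕ) : ZMod (4*q)) ((q:ℕ) : ZMod (4*q))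
        ((2*q+1 : ℕ) : ZMod (4*q))
        (by rw [hv 0 (by omega), hv 1 (by omega)]; omega)
        (by rw [hv 1 (by omega), hv q (by omega)]; omega)
        (by rw [hv q (by omega), hv (2*q+1) (by omega)]; omega),
      intervalMultiset_quad ((0:ℕ) : ZMod (4*q)) ((1:ℕ) : ZMod (4*q)) ((q+1:ℕ) : ZMod (4*q))
        ((2*q : ℕ) : ZMod (4*q))
        (by rw [hv 0 (by omega), hv 1 (by omega)]; omega)
        (by rw [hv 1 (by omega), hv (q+1) (by omega)]; omega)
        (by rw [hv (q+1) (by omega), hv (2*q) (by omega)]; omega)]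
    rw [ic_cast' (show (0:ℕ) < 1 by omega) (by omega),
      ic_cast' (show (0:ℕ) < q by omega) (by omega),
      ic_cast' (show (0:ℕ) < 2*q+1 by omega) (by omega),
      ic_cast' (show (1:ℕ) < q by omega) (by omega),
      ic_cast' (show (1:ℕ) < 2*q+1 by omega) (by omega),
      ic_cast' (show q < 2*q+1 by omega) (by omega),
      ic_cast' (show (0:ℕ) < q+1 by omega) (by omega),
      ic_cast' (show (0:ℕ) < 2*q by omega) (by omega),
      ic_cast' (show (1:ℕ) < q+1 by omega) (by omega),
      ic_cast' (show (1:ℕ) < 2*q by omega) (by omega),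
      ic_cast' (show q+1 < 2*q by omega) (by omega)]
    rw [show min (1-0) (4*q - (1-0)) = 1 by omega,
      show min (q-0) (4*q - (q-0)) = q by omega,
      show min (2*q+1-0) (4*q - (2*q+1-0)) = 2*q-1 by omega,
      show min (q-1) (4*q - (q-1)) = q-1 by omega,
      show min (2*q+1-1) (4*q - (2*q+1-1)) = 2*q by omega,
      show min (2*q+1-q) (4*q - (2*q+1-q)) = q+1 by omega,
      show min (q+1-0) (4*q - (q+1-0)) = q+1 by omega,
      show min (2*q-0) (4*q - (2*q-0)) = 2*q by omega,
      show min (q+1-1) (4*q - (q+1-1)) = q by omega,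
      show min (2*q-1) (4*q - (2*q-1)) = 2*q-1 by omega,
      show min (2*q-(q+1)) (4*q - (2*q-(q+1))) = q-1 by omega]
    -- goal: {1, q, 2*q-1, q-1, 2*q, q+1} = {1, q+1, 2*q, q, 2*q-1, q-1}
    simp only [Multiset.insert_eq_cons, ← Multiset.singleton_add]
    abel
  · -- no transposition
    rintro ⟨t, ht⟩
    have h0B : (0 : ZMod (4*q)) ∈ ({(0 : ZMod (4 * q)), ((1 : ℕ) : ZMod (4 * q)),
        ((q + 1 : ℕ) : ZMod (4 * q)), ((2 * q : ℕ) : ZMod (4 * q))} : Finset (ZMod (4 * q))) :=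
      Finset.mem_insert_self _ _
    rw [← ht, Finset.mem_image] at h0B
    obtain ⟨a, haA, hat⟩ := h0B
    have memB : ∀ w : ZMod (4*q), w ∈ ({(0 : ZMod (4 * q)), ((1 : ℕ) : ZMod (4 * q)),
        ((q : ℕ) : ZMod (4 * q)), ((2 * q + 1 : ℕ) : ZMod (4 * q))} : Finset (ZMod (4 * q))) →
        w + t ∈ ({(0 : ZMod (4 * q)), ((1 : ℕ) : ZMod (4 * q)),
        ((q + 1 : ℕ) : ZMod (4 * q)), ((2 * q : ℕ) : ZMod (4 * q))} : Finset (ZMod (4 * q))) := by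
      intro w hw
      rw [← ht]
      exact Finset.mem_image_of_mem _ hw
    simp only [Finset.mem_insert, Finset.mem_singleton] at haA
    rcases haA with rfl|rfl|rfl|rfl
    · -- a = 0, t = 0, witness q
      have hw : ((q:ℕ) : ZMod (4*q)) + t = ((q:ℕ) : ZMod (4*q)) := by
        linear_combination hat
      have hm := memB ((q:ℕ) : ZMod (4*q)) (by simp)
      rw [hw] at hm
      exact notinB hq q (by omega) (by omega) (by omega) (by omega) (by omega) hm
    · -- a = 1, t = -1, witness 0
      have hw : (0 : ZMod (4*q)) + t = ((4*q-1 : ℕ) : ZMod (4*q)) := by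
        push_cast [Nat.cast_sub (show 1 ≤ 4*q by omega)]
        linear_combination hat - h4
      have hm := memB 0 (by simp)
      rw [hw] at hm
      exact notinB hq (4*q-1) (by omega) (by omega) (by omega) (by omega) (by omega) hm
    · -- a = q, t = -q, witness 0
      have hw : (0 : ZMod (4*q)) + t = ((3*q : ℕ) : ZMod (4*q)) := by
        push_cast
        linear_combination hat - h4
      have hm := memB 0 (by simp)
      rw [hw] at hm
      exact notinB hq (3*q) (by omega) (by omega) (by omega) (by omega) (by omega) hm
    · -- a = 2q+1, t = -(2q+1), witness q
      have hw : ((q:ℕ) : ZMod (4*q)) + t = ((3*q-1 : ℕ) : ZMod (4*q)) := by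
        push_cast [Nat.cast_sub (show 1 ≤ 3*q by omega)] at hat ⊢
        linear_combination hat - h4
      have hm := memB ((q:ℕ) : ZMod (4*q)) (by simp)
      rw [hw] at hm
      exact notinB hq (3*q-1) (by omega) (by omega) (by omega) (by omega) (by omega) hm
  · -- no inversion
    rintro ⟨s, hs⟩
    have h0B : (0 : ZMod (4*q)) ∈ ({(0 : ZMod (4 * q)), ((1 : ℕ) : ZMod (4 * q)),
        ((q + 1 : ℕ) : ZMod (4 * q)), ((2 * q : ℕ) : ZMod (4 * q))} : Finset (ZMod (4 * q))) :=
      Finset.mem_insert_self _ _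
    rw [← hs, Finset.mem_image] at h0B
    obtain ⟨a, haA, hat⟩ := h0B
    have memB : ∀ w : ZMod (4*q), w ∈ ({(0 : ZMod (4 * q)), ((1 : ℕ) : ZMod (4 * q)),
        ((q : ℕ) : ZMod (4 * q)), ((2 * q + 1 : ℕ) : ZMod (4 * q))} : Finset (ZMod (4 * q))) →
        s - w ∈ ({(0 : ZMod (4 * q)), ((1 : ℕ) : ZMod (4 * q)),
        ((q + 1 : ℕ) : ZMod (4 * q)), ((2 * q : ℕ) : ZMod (4 * q))} : Finset (ZMod (4 * q))) := by
      intro w hw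
      rw [← hs]
      exact Finset.mem_image_of_mem _ hw
    simp only [Finset.mem_insert, Finset.mem_singleton] at haA
    rcases haA with rfl|rfl|rfl|rfl
    · -- s = 0, witness 1
      have hw : s - ((1:ℕ) : ZMod (4*q)) = ((4*q-1 : ℕ) : ZMod (4*q)) := by
        push_cast [Nat.cast_sub (show 1 ≤ 4*q by omega)]
        linear_combination hat - h4
      have hm := memB ((1:ℕ) : ZMod (4*q)) (by simp)
      rw [hw] at hm
      exact notinB hq (4*q-1) (by omega) (by omega) (by omega) (by omega) (by omega) hm
    · -- s = 1, witness q
      have hw : s - ((q:ℕ) : ZMod (4*q)) = ((3*q+1 : ℕ) : ZMod (4*q)) := by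
        push_cast
        linear_combination hat - h4
      have hm := memB ((q:ℕ) : ZMod (4*q)) (by simp)
      rw [hw] at hm
      exact notinB hq (3*q+1) (by omega) (by omega) (by omega) (by omega) (by omega) hm
    · -- s = q, witness 0
      have hw : s - (0 : ZMod (4*q)) = ((q:ℕ) : ZMod (4*q)) := by
        linear_combination hat
      have hm := memB 0 (by simp)
      rw [hw] at hm
      exact notinB hq q (by omega) (by omega) (by omega) (by omega) (by omega) hm
    · -- s = 2q+1, witness 0
      have hw : s - (0 : ZMod (4*q)) = ((2*q+1 : ℕ) : ZMod (4*q)) := by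
        linear_combination hat
      have hm := memB 0 (by simp)
      rw [hw] at hm
      exact notinB hq (2*q+1) (by omega) (by omega) (by omega) (by omega) (by omega) hm
end
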